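/- arXiv:quant-ph/0312061 — 3 statements merged into one kernel-verified Lean document; each statement's English description precedes it below -/
import Mathlib

section
/- Complementary slackness characterization: Suppose Π_i = Θ_iΔ_iΘ_i* with Δ_i ≥ 0, Π₀ = I − ΣΠ_i ≥ 0, Z ≥ 0 Hermitian, and A_i := Θ_i*(Z − p_iρ_i)Θ_i ≥ 0 for all i. Then Tr(Σ_i Π_i(Z−p_iρ_i) + Π₀Z) = 0 if and only if ZΠ₀ = 0 and A_iΔ_i = 0 for all 1 ≤ i ≤ m. -/
open Matrix ComplexOrder

/-! For positive semidefinite `A = CᴴC` and `B = DᴴD`, cyclicity gives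
`Tr (A B) = Tr ((D Cᴴ)ᴴ (D Cᴴ)) ≥ 0`, with equality iff `D Cᴴ = 0`, hence iff `A B = 0`.
By cyclicity the trace in question is `∑ i, Tr (A_i Δ_i) + Tr (Z Π₀)`, a sum of such
nonnegative terms, so it vanishes iff every term does. -/

namespace Matrix

open scoped MatrixOrder

variable {n 𝕜 : Type*} [Fintype n] [RCLike 𝕜]

lemma trace_conjTranspose_mul_self_mul_conjTranspose_mul_self {l m : Type*} [Fintype l]
    [Fintype m] (C : Matrix l n 𝕜) (D : Matrix m n 𝕜) :
    (Cᴴ * C * (Dᴴ * D)).trace = ((D * Cᴴ)ᴴ * (D * Cᴴ)).trace := by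
  rw [conjTranspose_mul, conjTranspose_conjTranspose, Matrix.mul_assoc, trace_mul_comm]
  simp only [Matrix.mul_assoc]

namespace PosSemidef

variable {A B : Matrix n n 𝕜}

lemma trace_mul_nonneg (hA : A.PosSemidef) (hB : B.PosSemidef) : 0 ≤ (A * B).trace := by
  classical
  obtain ⟨C, rfl⟩ := CStarAlgebra.nonneg_iff_eq_star_mul_self.mp hA.nonneg
  obtain ⟨D, rfl⟩ := CStarAlgebra.nonneg_iff_eq_star_mul_self.mp hB.nonneg
  rw [star_eq_conjTranspose, star_eq_conjTranspose,
    trace_conjTranspose_mul_self_mul_conjTranspose_mul_self]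
  exact (posSemidef_conjTranspose_mul_self _).trace_nonneg

lemma trace_mul_eq_zero_iff (hA : A.PosSemidef) (hB : B.PosSemidef) :
    (A * B).trace = 0 ↔ A * B = 0 := by
  classical
  refine ⟨fun h ↦ ?_, fun h ↦ h ▸ trace_zero n 𝕜⟩
  obtain ⟨C, rfl⟩ := CStarAlgebra.nonneg_iff_eq_star_mul_self.mp hA.nonneg
  obtain ⟨D, rfl⟩ := CStarAlgebra.nonneg_iff_eq_star_mul_self.mp hB.nonneg
  rw [star_eq_conjTranspose, star_eq_conjTranspose,
    trace_conjTranspose_mul_self_mul_conjTranspose_mul_self,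
    trace_conjTranspose_mul_self_eq_zero_iff] at h
  have hCD : C * Dᴴ = 0 := by simpa using congr_arg (·ᴴ) h
  rw [star_eq_conjTranspose, star_eq_conjTranspose, Matrix.mul_assoc, ← Matrix.mul_assoc C,
    hCD, Matrix.zero_mul, Matrix.mul_zero]

end PosSemidef

end Matrix

theorem complementary_slackness_iff_general
    (n m : ℕ) (r : Fin m → ℕ)
    (Θ : (i : Fin m) → Matrix (Fin n) (Fin (r i)) ℂ)
    (Δ : (i : Fin m) → Matrix (Fin (r i)) (Fin (r i)) ℂ)
    (ρ : Fin m → Matrix (Fin n) (Fin n) ℂ) (p : Fin m → ℝ)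
    (Z : Matrix (Fin n) (Fin n) ℂ)
    (hΔ : ∀ i, (Δ i).PosSemidef)
    (hsum : (1 - ∑ i, Θ i * Δ i * (Θ i)ᴴ).PosSemidef)
    (hZ : Z.PosSemidef)
    (hA : ∀ i, ((Θ i)ᴴ * (Z - (p i : ℂ) • ρ i) * Θ i).PosSemidef) :
    (∑ i, Θ i * Δ i * (Θ i)ᴴ * (Z - (p i : ℂ) • ρ i)
        + (1 - ∑ i, Θ i * Δ i * (Θ i)ᴴ) * Z).trace = 0 ↔
      (Z * (1 - ∑ i, Θ i * Δ i * (Θ i)ᴴ) = 0 ∧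
        ∀ i, ((Θ i)ᴴ * (Z - (p i : ℂ) • ρ i) * Θ i) * Δ i = 0) := by
  set P₀ := 1 - ∑ i, Θ i * Δ i * (Θ i)ᴴ
  have htrace : (∑ i, Θ i * Δ i * (Θ i)ᴴ * (Z - (p i : ℂ) • ρ i) + P₀ * Z).trace =
      ∑ i, ((Θ i)ᴴ * (Z - (p i : ℂ) • ρ i) * Θ i * Δ i).trace + (Z * P₀).trace := by
    rw [trace_add, trace_sum, trace_mul_comm P₀]
    refine congrArg (· + _) (Finset.sum_congr rfl fun i _ ↦ ?_)
    rw [Matrix.mul_assoc _ (Θ i)ᴴ, trace_mul_comm, ← Matrix.mul_assoc]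
  have hterm : ∀ i ∈ Finset.univ, 0 ≤ ((Θ i)ᴴ * (Z - (p i : ℂ) • ρ i) * Θ i * Δ i).trace :=
    fun i _ ↦ (hA i).trace_mul_nonneg (hΔ i)
  rw [htrace, add_eq_zero_iff_of_nonneg (Finset.sum_nonneg hterm) (hZ.trace_mul_nonneg hsum),
    Finset.sum_eq_zero_iff_of_nonneg hterm, hZ.trace_mul_eq_zero_iff hsum, and_comm]
  simp only [Finset.mem_univ, true_imp_iff, fun i ↦ (hA i).trace_mul_eq_zero_iff (hΔ i)]

theorem complementary_slackness_iff
    (n m : ℕ) (r : Fin m → ℕ)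
    (Θ : (i : Fin m) → Matrix (Fin n) (Fin (r i)) ℂ)
    (Δ : (i : Fin m) → Matrix (Fin (r i)) (Fin (r i)) ℂ)
    (ρ : Fin m → Matrix (Fin n) (Fin n) ℂ) (p : Fin m → ℝ)
    (Z : Matrix (Fin n) (Fin n) ℂ)
    (hΘ : ∀ i, (Θ i)ᴴ * Θ i = 1)
    (hΔ : ∀ i, (Δ i).PosSemidef)
    (hsum : (1 - ∑ i, Θ i * Δ i * (Θ i)ᴴ).PosSemidef)
    (hρ : ∀ i, (ρ i).PosSemidef) (hρtr : ∀ i, (ρ i).trace = 1)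
    (hp : ∀ i, 0 < p i)
    (hZ : Z.PosSemidef)
    (hA : ∀ i, ((Θ i)ᴴ * (Z - (p i : ℂ) • ρ i) * Θ i).PosSemidef) :
    (∑ i, Θ i * Δ i * (Θ i)ᴴ * (Z - (p i : ℂ) • ρ i)
        + (1 - ∑ i, Θ i * Δ i * (Θ i)ᴴ) * Z).trace = 0 ↔
      (Z * (1 - ∑ i, Θ i * Δ i * (Θ i)ᴴ) = 0 ∧
        ∀ i, ((Θ i)ᴴ * (Z - (p i : ℂ) • ρ i) * Θ i) * Δ i = 0) :=
  complementary_slackness_iff_general n m r Θ Δ ρ p Z hΔ hsum hZ hA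
end

section
/- Sufficiency of the optimality conditions: If Z is dual feasible (Z ≥ 0 and Θ_i*(Z − p_iρ_i)Θ_i ≥ 0 for all i) and Π = {Π_i = Θ_iΔ_iΘ_i*} is primal feasible with ZΠ₀ = 0 and Θ_i*(Z − p_iρ_i)Θ_i Δ_i = 0 for all i, then Σ_i p_i Tr(ρ_iΠ_i) = Tr(Z), and hence Π achieves the maximum of the primal problem and Z the minimum of the dual problem. -/
/-!
Write `Π₀ = 1 - Σ Θᵢ Δᵢ Θᵢᴴ`. Cycling the trace gives, for arbitrary `Z` and `Δ`,
`Tr Z - Σ pᵢ Tr(ρᵢ Θᵢ Δᵢ Θᵢᴴ) = Tr(Z Π₀) + Σ Tr(Θᵢᴴ (Z - pᵢ ρᵢ) Θᵢ Δᵢ)`.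
The trace of a product of two positive semidefinite matrices is nonnegative, so for any dual
feasible `Z` and primal feasible `Δ` the right-hand side is nonnegative (weak duality), and
complementary slackness makes it vanish.
-/

open Matrix ComplexOrder

namespace Matrix

variable {𝕜 : Type*} [RCLike 𝕜]

open scoped MatrixOrder in
theorem PosSemidef.trace_mul_nonneg_s10 {n : Type*} [Fintype n] [DecidableEq n]
    {A B : Matrix n n 𝕜} (hA : A.PosSemidef) (hB : B.PosSemidef) :
    0 ≤ (A * B).trace := by
  have hsqrt : (CFC.sqrt B)ᴴ = CFC.sqrt B := (CFC.sqrt_nonneg B).posSemidef.isHermitian.eq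
  have hcycle : (A * B).trace = ((CFC.sqrt B)ᴴ * A * CFC.sqrt B).trace := by
    conv_lhs => rw [← CFC.sqrt_mul_sqrt_self B hB.nonneg]
    rw [hsqrt, ← Matrix.mul_assoc, Matrix.trace_mul_comm, ← Matrix.mul_assoc]
  rw [hcycle]
  exact (hA.conjTranspose_mul_mul_same _).trace_nonneg

theorem trace_conjTranspose_mul_mul_mul {n k : Type*} [Fintype n] [Fintype k]
    (T : Matrix n k 𝕜) (M : Matrix n n 𝕜) (D : Matrix k k 𝕜) :
    (Tᴴ * M * T * D).trace = (M * (T * D * Tᴴ)).trace := by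
  rw [Matrix.mul_assoc, Matrix.mul_assoc, trace_mul_comm]
  simp only [Matrix.mul_assoc]

end Matrix

section DualityGap

variable {ι n : Type*} [Fintype ι] [Fintype n] [DecidableEq n] {k : ι → Type*}
  [∀ i, Fintype (k i)] (Θ : (i : ι) → Matrix n (k i) ℂ) (Δ : (i : ι) → Matrix (k i) (k i) ℂ)
  (ρ : ι → Matrix n n ℂ) (p : ι → ℝ) (Z : Matrix n n ℂ)

theorem trace_sub_sum_trace_eq_duality_gap :
    Z.trace - ∑ i, (p i : ℂ) * (ρ i * (Θ i * Δ i * (Θ i)ᴴ)).trace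
      = (Z * (1 - ∑ i, Θ i * Δ i * (Θ i)ᴴ)).trace
        + ∑ i, ((Θ i)ᴴ * (Z - (p i : ℂ) • ρ i) * Θ i * Δ i).trace := by
  simp only [trace_conjTranspose_mul_mul_mul, Matrix.sub_mul, Matrix.smul_mul, trace_sub,
    trace_smul, smul_eq_mul, Matrix.mul_sub, Matrix.mul_one, Finset.mul_sum, trace_sum,
    Finset.sum_sub_distrib]
  ring

theorem re_trace_sub_sum_eq_re_duality_gap :
    Z.trace.re - ∑ i, p i * (ρ i * (Θ i * Δ i * (Θ i)ᴴ)).trace.re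
      = ((Z * (1 - ∑ i, Θ i * Δ i * (Θ i)ᴴ)).trace
        + ∑ i, ((Θ i)ᴴ * (Z - (p i : ℂ) • ρ i) * Θ i * Δ i).trace).re := by
  rw [← trace_sub_sum_trace_eq_duality_gap, Complex.sub_re, Complex.re_sum]
  simp only [Complex.re_ofReal_mul]

theorem sum_re_trace_le_re_trace [∀ i, DecidableEq (k i)] (hZ : Z.PosSemidef)
    (hdual : ∀ i, ((Θ i)ᴴ * (Z - (p i : ℂ) • ρ i) * Θ i).PosSemidef)
    (hΔ : ∀ i, (Δ i).PosSemidef) (hsum : (1 - ∑ i, Θ i * Δ i * (Θ i)ᴴ).PosSemidef) :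
    ∑ i, p i * (ρ i * (Θ i * Δ i * (Θ i)ᴴ)).trace.re ≤ Z.trace.re := by
  have hgap : 0 ≤ (Z * (1 - ∑ i, Θ i * Δ i * (Θ i)ᴴ)).trace
      + ∑ i, ((Θ i)ᴴ * (Z - (p i : ℂ) • ρ i) * Θ i * Δ i).trace :=
    add_nonneg (hZ.trace_mul_nonneg_s10 hsum)
      (Finset.sum_nonneg fun i _ => (hdual i).trace_mul_nonneg_s10 (hΔ i))
  have := re_trace_sub_sum_eq_re_duality_gap Θ Δ ρ p Z
  linarith [(Complex.le_def.mp hgap).1, Complex.zero_re]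

theorem sum_re_trace_eq_re_trace_of_slackness
    (hslack0 : Z * (1 - ∑ i, Θ i * Δ i * (Θ i)ᴴ) = 0)
    (hslack : ∀ i, (Θ i)ᴴ * (Z - (p i : ℂ) • ρ i) * Θ i * Δ i = 0) :
    ∑ i, p i * (ρ i * (Θ i * Δ i * (Θ i)ᴴ)).trace.re = Z.trace.re := by
  have := re_trace_sub_sum_eq_re_duality_gap Θ Δ ρ p Z
  simp only [hslack0, hslack, trace_zero, Finset.sum_const_zero, add_zero, Complex.zero_re] at this
  linarith

end DualityGap

theorem optimality_conditions_sufficient_general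
    (n m : ℕ) (r : Fin m → ℕ)
    (Θ : (i : Fin m) → Matrix (Fin n) (Fin (r i)) ℂ)
    (Δ : (i : Fin m) → Matrix (Fin (r i)) (Fin (r i)) ℂ)
    (ρ : Fin m → Matrix (Fin n) (Fin n) ℂ) (p : Fin m → ℝ)
    (Z : Matrix (Fin n) (Fin n) ℂ)
    -- dual feasibility of Z
    (hZ : Z.PosSemidef)
    (hdual : ∀ i, ((Θ i)ᴴ * (Z - (p i : ℂ) • ρ i) * Θ i).PosSemidef)
    -- primal feasibility
    (hΔ : ∀ i, (Δ i).PosSemidef)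
    (hsum : (1 - ∑ i, Θ i * Δ i * (Θ i)ᴴ).PosSemidef)
    -- complementary slackness
    (hslack0 : Z * (1 - ∑ i, Θ i * Δ i * (Θ i)ᴴ) = 0)
    (hslack : ∀ i, ((Θ i)ᴴ * (Z - (p i : ℂ) • ρ i) * Θ i) * Δ i = 0) :
    -- the primal value equals the dual value
    (∑ i, p i * ((ρ i * (Θ i * Δ i * (Θ i)ᴴ)).trace).re = (Z.trace).re) ∧
    -- Π achieves the primal maximum
    (∀ Δ' : (i : Fin m) → Matrix (Fin (r i)) (Fin (r i)) ℂ,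
      (∀ i, (Δ' i).PosSemidef) →
      (1 - ∑ i, Θ i * Δ' i * (Θ i)ᴴ).PosSemidef →
      ∑ i, p i * ((ρ i * (Θ i * Δ' i * (Θ i)ᴴ)).trace).re ≤
        ∑ i, p i * ((ρ i * (Θ i * Δ i * (Θ i)ᴴ)).trace).re) ∧
    -- Z achieves the dual minimum
    (∀ Z' : Matrix (Fin n) (Fin n) ℂ, Z'.PosSemidef →
      (∀ i, ((Θ i)ᴴ * (Z' - (p i : ℂ) • ρ i) * Θ i).PosSemidef) →
      (Z.trace).re ≤ (Z'.trace).re) := by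
  have hvalue := sum_re_trace_eq_re_trace_of_slackness Θ Δ ρ p Z hslack0 hslack
  refine ⟨hvalue, fun Δ' hΔ' hsum' => ?_, fun Z' hZ' hdual' => ?_⟩
  · rw [hvalue]
    exact sum_re_trace_le_re_trace Θ Δ' ρ p Z hZ hdual hΔ' hsum'
  · rw [← hvalue]
    exact sum_re_trace_le_re_trace Θ Δ ρ p Z' hZ' hdual' hΔ hsum

theorem optimality_conditions_sufficient
    (n m : ℕ) (r : Fin m → ℕ)
    (Θ : (i : Fin m) → Matrix (Fin n) (Fin (r i)) ℂ)
    (Δ : (i : Fin m) → Matrix (Fin (r i)) (Fin (r i)) ℂ)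
    (ρ : Fin m → Matrix (Fin n) (Fin n) ℂ) (p : Fin m → ℝ)
    (Z : Matrix (Fin n) (Fin n) ℂ)
    (hΘ : ∀ i, (Θ i)ᴴ * Θ i = 1)
    (hρ : ∀ i, (ρ i).PosSemidef) (hρtr : ∀ i, (ρ i).trace = 1)
    (hp : ∀ i, 0 < p i)
    -- dual feasibility of Z
    (hZ : Z.PosSemidef)
    (hdual : ∀ i, ((Θ i)ᴴ * (Z - (p i : ℂ) • ρ i) * Θ i).PosSemidef)
    -- primal feasibility
    (hΔ : ∀ i, (Δ i).PosSemidef)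
    (hsum : (1 - ∑ i, Θ i * Δ i * (Θ i)ᴴ).PosSemidef)
    -- complementary slackness
    (hslack0 : Z * (1 - ∑ i, Θ i * Δ i * (Θ i)ᴴ) = 0)
    (hslack : ∀ i, ((Θ i)ᴴ * (Z - (p i : ℂ) • ρ i) * Θ i) * Δ i = 0) :
    -- the primal value equals the dual value
    (∑ i, p i * ((ρ i * (Θ i * Δ i * (Θ i)ᴴ)).trace).re = (Z.trace).re) ∧
    -- Π achieves the primal maximum
    (∀ Δ' : (i : Fin m) → Matrix (Fin (r i)) (Fin (r i)) ℂ,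
      (∀ i, (Δ' i).PosSemidef) →
      (1 - ∑ i, Θ i * Δ' i * (Θ i)ᴴ).PosSemidef →
      ∑ i, p i * ((ρ i * (Θ i * Δ' i * (Θ i)ᴴ)).trace).re ≤
        ∑ i, p i * ((ρ i * (Θ i * Δ i * (Θ i)ᴴ)).trace).re) ∧
    -- Z achieves the dual minimum
    (∀ Z' : Matrix (Fin n) (Fin n) ℂ, Z'.PosSemidef →
      (∀ i, ((Θ i)ᴴ * (Z' - (p i : ℂ) • ρ i) * Θ i).PosSemidef) →
      (Z.trace).re ≤ (Z'.trace).re) :=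
  optimality_conditions_sufficient_general n m r Θ Δ ρ p Z hZ hdual hΔ hsum hslack0 hslack
end

section
/- In the orthogonal null space case, the dual problem reduces to a block-diagonal problem: if Θ = [Θ₁ ... Θ_m] has orthonormal columns with Θ_i*Θ_j = 0 for i ≠ j, then the minimum of Tr(Z) over Hermitian Z ≥ 0 with Θ_i*ZΘ_i ≥ p_iΘ_i*ρ_iΘ_i for all i equals Σ_{i=1}^m p_i Tr(Θ_i*ρ_iΘ_i), achieved by Z = Σ_i p_i Θ_iΘ_i*ρ_iΘ_iΘ_i*. -/
/-!
Since the blocks `Θᵢ` are isometries with mutually orthogonal ranges, compressing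
`Z₀ = ∑ⱼ pⱼ Θⱼ (Θⱼᴴ ρⱼ Θⱼ) Θⱼᴴ` by `Θᵢ` kills every cross term, so `Θᵢᴴ Z₀ Θᵢ = pᵢ Θᵢᴴ ρᵢ Θᵢ`
exactly and `Tr Z₀ = ∑ᵢ pᵢ Tr(Θᵢᴴ ρᵢ Θᵢ)`. Conversely, for any feasible `Z ≥ 0` the block
traces add up to `Tr(Z P)` with `P = ∑ᵢ Θᵢ Θᵢᴴ` an orthogonal projection, and
`Tr Z - Tr(Z P) = Tr((1 - P) Z (1 - P)) ≥ 0`.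
-/

open Matrix ComplexOrder

namespace Matrix

variable {n ι R : Type*} [Fintype n] [CommRing R] [StarRing R]

lemma trace_mul_mul_conjTranspose_of_conjTranspose_mul_self {k : Type*} [Fintype k]
    [DecidableEq k] {V : Matrix n k R} (hV : Vᴴ * V = 1) (B : Matrix k k R) :
    (V * B * Vᴴ).trace = B.trace := by
  rw [trace_mul_cycle, hV, Matrix.one_mul]

section PartialOrder

variable [PartialOrder R] [IsOrderedAddMonoid R] [DecidableEq n]

lemma PosSemidef.trace_mul_le_trace_of_isIdempotentElem {Z P : Matrix n n R}
    (hZ : Z.PosSemidef) (hP : P.IsHermitian) (hPP : IsIdempotentElem P) :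
    (Z * P).trace ≤ Z.trace := by
  have hQ : (1 - P)ᴴ = 1 - P := by rw [conjTranspose_sub, conjTranspose_one, hP.eq]
  have hcompl := hZ.mul_mul_conjTranspose_same (1 - P)
  rw [hQ] at hcompl
  have htrace : ((1 - P) * Z * (1 - P)).trace = Z.trace - (Z * P).trace := by
    rw [trace_mul_cycle, hPP.one_sub.eq, trace_mul_comm, Matrix.mul_sub, Matrix.mul_one, trace_sub]
  exact sub_nonneg.mp (htrace ▸ hcompl.trace_nonneg)

end PartialOrder

section OrthonormalBlocks

variable [Fintype ι] {κ : ι → Type*} [∀ i, Fintype (κ i)] {V : (i : ι) → Matrix n (κ i) R}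

lemma conjTranspose_mul_sum_smul_mul_mul_conjTranspose_mul [∀ i, DecidableEq (κ i)]
    (hV : ∀ i, (V i)ᴴ * V i = 1) (horth : ∀ i j, i ≠ j → (V i)ᴴ * V j = 0)
    (c : ι → R) (B : (i : ι) → Matrix (κ i) (κ i) R) (i : ι) :
    (V i)ᴴ * (∑ j, c j • (V j * B j * (V j)ᴴ)) * V i = c i • B i := by
  have hcompress : ∀ j, (V i)ᴴ * (V j * B j * (V j)ᴴ) * V i
      = (V i)ᴴ * V j * B j * ((V j)ᴴ * V i) := fun j => by simp only [Matrix.mul_assoc]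
  rw [Matrix.mul_sum, Matrix.sum_mul, Fintype.sum_eq_single i fun j hj => ?_]
  · rw [Matrix.mul_smul, Matrix.smul_mul, hcompress, hV, Matrix.one_mul, Matrix.mul_one]
  · rw [Matrix.mul_smul, Matrix.smul_mul, hcompress, horth i j hj.symm, Matrix.zero_mul,
      Matrix.zero_mul, smul_zero]

lemma isIdempotentElem_sum_mul_conjTranspose [∀ i, DecidableEq (κ i)]
    (hV : ∀ i, (V i)ᴴ * V i = 1) (horth : ∀ i j, i ≠ j → (V i)ᴴ * V j = 0) :
    IsIdempotentElem (∑ i, V i * (V i)ᴴ) := by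
  rw [IsIdempotentElem, Finset.sum_mul]
  refine Fintype.sum_congr _ _ fun i => ?_
  rw [Finset.mul_sum, Fintype.sum_eq_single i fun j hj => ?_]
  · rw [Matrix.mul_assoc, ← Matrix.mul_assoc (V i)ᴴ, hV, Matrix.one_mul]
  · rw [Matrix.mul_assoc, ← Matrix.mul_assoc (V i)ᴴ, horth i j hj.symm, Matrix.zero_mul,
      Matrix.mul_zero]

lemma sum_trace_conjTranspose_mul_mul (Z : Matrix n n R) :
    ∑ i, ((V i)ᴴ * Z * V i).trace = (Z * ∑ i, V i * (V i)ᴴ).trace := by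
  rw [Matrix.mul_sum, trace_sum]
  refine Fintype.sum_congr _ _ fun i => ?_
  rw [trace_mul_comm, ← Matrix.mul_assoc, trace_mul_comm]

lemma PosSemidef.sum_trace_conjTranspose_mul_mul_le_trace [PartialOrder R]
    [IsOrderedAddMonoid R] [DecidableEq n] [∀ i, DecidableEq (κ i)] {Z : Matrix n n R}
    (hZ : Z.PosSemidef)
    (hV : ∀ i, (V i)ᴴ * V i = 1) (horth : ∀ i j, i ≠ j → (V i)ᴴ * V j = 0) :
    ∑ i, ((V i)ᴴ * Z * V i).trace ≤ Z.trace :=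
  sum_trace_conjTranspose_mul_mul (V := V) Z ▸ hZ.trace_mul_le_trace_of_isIdempotentElem
    (isSelfAdjoint_sum _ fun i _ => isHermitian_mul_conjTranspose_self (V i))
    (isIdempotentElem_sum_mul_conjTranspose hV horth)

end OrthonormalBlocks

end Matrix

theorem dual_block_diagonal_orthogonal_general
    (n m : ℕ) (r : Fin m → ℕ)
    (Θ : (i : Fin m) → Matrix (Fin n) (Fin (r i)) ℂ)
    (ρ : Fin m → Matrix (Fin n) (Fin n) ℂ) (p : Fin m → ℝ)
    (hΘ : ∀ i, (Θ i)ᴴ * Θ i = 1)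
    (horth : ∀ i j, i ≠ j → (Θ i)ᴴ * Θ j = 0)
    (hρ : ∀ i, (ρ i).PosSemidef)
    (hp : ∀ i, 0 < p i) :
    -- the candidate Z is dual feasible and achieves the value
    ((∑ i, (p i : ℂ) • (Θ i * ((Θ i)ᴴ * ρ i * Θ i) * (Θ i)ᴴ)).PosSemidef ∧
     (∀ i, ((Θ i)ᴴ * (∑ j, (p j : ℂ) • (Θ j * ((Θ j)ᴴ * ρ j * Θ j) * (Θ j)ᴴ)) * Θ i
        - (p i : ℂ) • ((Θ i)ᴴ * ρ i * Θ i)).PosSemidef) ∧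
     ((∑ i, (p i : ℂ) • (Θ i * ((Θ i)ᴴ * ρ i * Θ i) * (Θ i)ᴴ)).trace).re
        = ∑ i, p i * (((Θ i)ᴴ * ρ i * Θ i).trace).re) ∧
    -- and it is optimal: every dual feasible Z has at least this trace
    (∀ Z : Matrix (Fin n) (Fin n) ℂ, Z.PosSemidef →
      (∀ i, ((Θ i)ᴴ * Z * Θ i - (p i : ℂ) • ((Θ i)ᴴ * ρ i * Θ i)).PosSemidef) →
      ∑ i, p i * (((Θ i)ᴴ * ρ i * Θ i).trace).re ≤ (Z.trace).re) := by
  refine ⟨⟨?_, fun i => ?_, ?_⟩, fun Z hZ hfeas => ?_⟩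
  · refine posSemidef_sum _ fun i _ => PosSemidef.smul ?_ (Complex.zero_le_real.mpr (hp i).le)
    exact ((hρ i).conjTranspose_mul_mul_same _).mul_mul_conjTranspose_same _
  · rw [conjTranspose_mul_sum_smul_mul_mul_conjTranspose_mul hΘ horth, sub_self]
    exact .zero
  · rw [trace_sum, Complex.re_sum]
    refine Fintype.sum_congr _ _ fun i => ?_
    rw [trace_smul, trace_mul_mul_conjTranspose_of_conjTranspose_mul_self (hΘ i), smul_eq_mul,
      Complex.re_ofReal_mul]
  · have hblock : ∀ i, (p i : ℂ) * ((Θ i)ᴴ * ρ i * Θ i).trace ≤ ((Θ i)ᴴ * Z * Θ i).trace :=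
      fun i => sub_nonneg.mp (by simpa [trace_sub, trace_smul] using (hfeas i).trace_nonneg)
    have hle := (Finset.sum_le_sum fun i _ => hblock i).trans
      (hZ.sum_trace_conjTranspose_mul_mul_le_trace hΘ horth)
    simpa only [Complex.re_sum, Complex.re_ofReal_mul] using (Complex.le_def.mp hle).1

theorem dual_block_diagonal_orthogonal
    (n m : ℕ) (r : Fin m → ℕ)
    (Θ : (i : Fin m) → Matrix (Fin n) (Fin (r i)) ℂ)
    (ρ : Fin m → Matrix (Fin n) (Fin n) ℂ) (p : Fin m → ℝ)
    (hΘ : ∀ i, (Θ i)ᴴ * Θ i = 1)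
    (horth : ∀ i j, i ≠ j → (Θ i)ᴴ * Θ j = 0)
    (hρ : ∀ i, (ρ i).PosSemidef) (hρtr : ∀ i, (ρ i).trace = 1)
    (hp : ∀ i, 0 < p i) :
    -- the candidate Z is dual feasible and achieves the value
    ((∑ i, (p i : ℂ) • (Θ i * ((Θ i)ᴴ * ρ i * Θ i) * (Θ i)ᴴ)).PosSemidef ∧
     (∀ i, ((Θ i)ᴴ * (∑ j, (p j : ℂ) • (Θ j * ((Θ j)ᴴ * ρ j * Θ j) * (Θ j)ᴴ)) * Θ i
        - (p i : ℂ) • ((Θ i)ᴴ * ρ i * Θ i)).PosSemidef) ∧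
     ((∑ i, (p i : ℂ) • (Θ i * ((Θ i)ᴴ * ρ i * Θ i) * (Θ i)ᴴ)).trace).re
        = ∑ i, p i * (((Θ i)ᴴ * ρ i * Θ i).trace).re) ∧
    -- and it is optimal: every dual feasible Z has at least this trace
    (∀ Z : Matrix (Fin n) (Fin n) ℂ, Z.PosSemidef →
      (∀ i, ((Θ i)ᴴ * Z * Θ i - (p i : ℂ) • ((Θ i)ᴴ * ρ i * Θ i)).PosSemidef) →
      ∑ i, p i * (((Θ i)ᴴ * ρ i * Θ i).trace).re ≤ (Z.trace).re) :=
  dual_block_diagonal_orthogonal_general n m r Θ ρ p hΘ horth hρ hp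
end
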